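/- (Factorization formula) For every positive integer a, all rationals μ and ν, and every z = x + iy ∈ ℂ with y > 0: ∑_{(m,n)∈ℤ×ℤ} e^{2πi(mν + nμ)} · e^{π(imn − |mz−n|²/(2y))/a} = √(2ay) · θ[aμ; ν](z/a) · θ[μ; −aν](−a·conj(z)), where conj(z) = x − iy. -/

import Mathlib

/-!
For fixed `m`, the identity `|mz - n|² = (mz - n)(m z̄ - n)` makes the summand a Gaussian in `n`,
so Poisson summation in `n` turns the inner sum into `√(2ay)` times a sum over `k`. Completing the
square, its `(m, k)` term factors as the `(m + ak)`-th term of `θ[aμ; ν](z/a)` times the `k`-th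
term of `θ[μ; -aν](-a z̄)`, and the shear `(m, k) ↦ (m + ak, k)` of `ℤ²` splits the double sum
into the product of the two theta series. Absolute convergence of the left-hand side comes from
the bound `|mz - n|² ≥ δ (m² + n²)`.
-/

open Complex

/-- The weight-1/2 theta function with characteristics `μ, ν ∈ ℚ`:
`θ[μ; ν](w) = ∑_{n ∈ ℤ+μ} exp(πin²w + 2πiνn)`. -/
noncomputable def thetaChar (μ ν : ℚ) (w : ℂ) : ℂ :=
  ∑' n : ℤ, Complex.exp (Real.pi * Complex.I * ((n : ℂ) + (μ : ℂ)) ^ 2 * w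
    + 2 * Real.pi * Complex.I * (ν : ℂ) * ((n : ℂ) + (μ : ℂ)))

open Real ComplexConjugate

lemma summable_exp_neg_mul_int_sq {c : ℝ} (hc : 0 < c) :
    Summable fun n : ℤ ↦ rexp (-c * n ^ 2) := by
  simpa [← mul_assoc, mul_div_cancel₀ _ pi_ne_zero] using
    summable_pow_mul_jacobiTheta₂_term_bound 0 (div_pos hc pi_pos) 0

lemma exists_pos_mul_le_normSq {z : ℂ} (hz : z.im ≠ 0) :
    ∃ δ > 0, ∀ u v : ℝ, δ * (u ^ 2 + v ^ 2) ≤ normSq (u * z - v) := by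
  refine ⟨z.im ^ 2 / (2 * (1 + z.re ^ 2 + z.im ^ 2)), by positivity, fun u v ↦ ?_⟩
  have hnormSq : normSq (u * z - v) = (u * z.re - v) ^ 2 + u ^ 2 * z.im ^ 2 := by
    simp only [normSq_apply, sub_re, mul_re, ofReal_re, ofReal_im, zero_mul, sub_zero, sub_im,
      mul_im, add_zero]
    ring
  rw [hnormSq, div_mul_eq_mul_div, div_le_iff₀ (by positivity)]
  nlinarith [sq_nonneg (z.im * (2 * u * z.re - v)), sq_nonneg (u * z.re - v),
    mul_nonneg (sq_nonneg z.re) (sq_nonneg (u * z.re - v)),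
    mul_nonneg (sq_nonneg u) (sq_nonneg z.im), mul_nonneg (sq_nonneg (u * z.im)) (sq_nonneg z.im)]

lemma summable_exp_neg_mul_normSq {z : ℂ} (hz : z.im ≠ 0) {c : ℝ} (hc : 0 < c) :
    Summable fun p : ℤ × ℤ ↦ rexp (-c * normSq (p.1 * z - p.2)) := by
  obtain ⟨δ, hδ, hle⟩ := exists_pos_mul_le_normSq hz
  have hgauss := summable_exp_neg_mul_int_sq (mul_pos hc hδ)
  refine (hgauss.mul_of_nonneg hgauss (fun _ ↦ (exp_pos _).le) (fun _ ↦ (exp_pos _).le))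
    |>.of_nonneg_of_le (fun _ ↦ (exp_pos _).le) fun p ↦ ?_
  rw [← Real.exp_add, exp_le_exp]
  have := hle p.1 p.2
  push_cast at this
  nlinarith

lemma tsum_exp_neg_inv_mul_sq_add {t : ℝ} (ht : 0 < t) (b : ℂ) :
    ∑' n : ℤ, cexp (-π * (t⁻¹ : ℝ) * n ^ 2 + 2 * π * b * n) =
      √t * ∑' n : ℤ, cexp (-π * t * (n + I * b) ^ 2) := by
  have hre : 0 < ((t⁻¹ : ℝ) : ℂ).re := by simpa using ht
  have hsqrt : ((t⁻¹ : ℝ) : ℂ) ^ (1 / 2 : ℂ) = ((√t)⁻¹ : ℝ) := by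
    rw [← Real.sqrt_inv, Real.sqrt_eq_rpow, ofReal_cpow (inv_nonneg.mpr ht.le)]; norm_num
  rw [Complex.tsum_exp_neg_quadratic hre, hsqrt]
  simp only [ofReal_inv, div_inv_eq_mul, one_mul]

noncomputable def thetaCharTerm (μ ν : ℚ) (w : ℂ) (n : ℤ) : ℂ :=
  cexp (π * I * ((n : ℂ) + μ) ^ 2 * w + 2 * π * I * ν * ((n : ℂ) + μ))

lemma thetaChar_eq_tsum (μ ν : ℚ) (w : ℂ) : thetaChar μ ν w = ∑' n, thetaCharTerm μ ν w n := rfl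

lemma thetaCharTerm_eq_mul_jacobiTheta₂_term (μ ν : ℚ) (w : ℂ) (n : ℤ) :
    thetaCharTerm μ ν w n =
      cexp (π * I * μ ^ 2 * w + 2 * π * I * ν * μ) * jacobiTheta₂_term n (μ * w + ν) w := by
  rw [thetaCharTerm, jacobiTheta₂_term, ← Complex.exp_add]
  ring_nf

lemma summable_norm_thetaCharTerm (μ ν : ℚ) {w : ℂ} (hw : 0 < w.im) :
    Summable fun n ↦ ‖thetaCharTerm μ ν w n‖ := by
  simp_rw [thetaCharTerm_eq_mul_jacobiTheta₂_term, norm_mul]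
  exact ((summable_jacobiTheta₂_term_iff _ _).mpr hw).norm.mul_left _

lemma conj_eq_sub_two_mul_I_mul_im (z : ℂ) : conj z = z - 2 * I * z.im := by
  have h := sub_conj z
  push_cast at h
  linear_combination -h

def shearEquiv (a : ℤ) : ℤ × ℤ ≃ ℤ × ℤ where
  toFun p := (p.1 + a * p.2, p.2)
  invFun p := (p.1 - a * p.2, p.2)
  left_inv p := by simp
  right_inv p := by simp

section Factorization

variable (a : ℕ) (μ ν : ℚ) (z : ℂ)

noncomputable def factorizationTerm (p : ℤ × ℤ) : ℂ :=
  cexp (2 * π * I * (p.1 * ν + p.2 * μ)) *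
    cexp (π * (I * p.1 * p.2 - normSq (p.1 * z - p.2) / (2 * z.im)) / a)

lemma norm_factorizationTerm (p : ℤ × ℤ) :
    ‖factorizationTerm a μ ν z p‖ = rexp (-(π / (2 * a * z.im)) * normSq (p.1 * z - p.2)) := by
  have hexp : (π : ℂ) * (I * p.1 * p.2 - normSq (p.1 * z - p.2) / (2 * z.im)) / a =
      ((-(π / (2 * a * z.im)) * normSq (p.1 * z - p.2) : ℝ) : ℂ) +
        ((π * p.1 * p.2 / a : ℝ) : ℂ) * I := by
    push_cast; ring
  have hphase : 2 * π * I * (p.1 * ν + p.2 * μ) = ((2 * π * (p.1 * ν + p.2 * μ) : ℝ) : ℂ) * I := by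
    push_cast; ring
  rw [factorizationTerm, norm_mul, hexp, hphase, Complex.norm_exp_ofReal_mul_I, one_mul,
    Complex.norm_exp, add_re, ofReal_re, mul_I_re, ofReal_im, neg_zero, add_zero]

lemma summable_factorizationTerm (ha : 0 < a) (hz : 0 < z.im) :
    Summable (factorizationTerm a μ ν z) :=
  .of_norm <| by simpa only [norm_factorizationTerm] using
    summable_exp_neg_mul_normSq hz.ne' (c := π / (2 * a * z.im)) (by positivity)

lemma factorizationTerm_eq_mul_exp_quadratic (ha : a ≠ 0) (hz : z.im ≠ 0) (m n : ℤ) :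
    factorizationTerm a μ ν z (m, n) =
      cexp (2 * π * I * m * ν - π * m ^ 2 * z * conj z / (2 * a * z.im)) *
        cexp (-π * ((2 * a * z.im)⁻¹ : ℝ) * n ^ 2 +
          2 * π * (m * z / (2 * a * z.im) + I * μ) * n) := by
  have hy : (z.im : ℂ) ≠ 0 := ofReal_ne_zero.mpr hz
  rw [factorizationTerm, ← Complex.exp_add, ← Complex.exp_add, ← mul_conj]
  congr 1
  simp only [map_sub, map_mul, map_intCast, conj_eq_sub_two_mul_I_mul_im z]
  push_cast
  field_simp
  ring

lemma exp_mul_exp_eq_thetaCharTerm_mul (ha : a ≠ 0) (hz : z.im ≠ 0) (m k : ℤ) :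
    cexp (2 * π * I * m * ν - π * m ^ 2 * z * conj z / (2 * a * z.im)) *
      cexp (-π * (2 * a * z.im : ℝ) * (((-k : ℤ) : ℂ) + I * (m * z / (2 * a * z.im) + I * μ)) ^ 2) =
    thetaCharTerm (a * μ) ν (z / a) (m + a * k) * thetaCharTerm μ (-a * ν) (-a * conj z) k := by
  have hy : (z.im : ℂ) ≠ 0 := ofReal_ne_zero.mpr hz
  rw [thetaCharTerm, thetaCharTerm, ← Complex.exp_add, ← Complex.exp_add,
    conj_eq_sub_two_mul_I_mul_im]
  congr 1
  push_cast
  field_simp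
  ring_nf
  simp only [I_sq, I_pow_three, I_pow_four]
  ring

lemma tsum_factorizationTerm_mk (ha : 0 < a) (hz : 0 < z.im) (m : ℤ) :
    ∑' n, factorizationTerm a μ ν z (m, n) = √(2 * a * z.im) *
      ∑' k, thetaCharTerm (a * μ) ν (z / a) (m + a * k) *
        thetaCharTerm μ (-a * ν) (-a * conj z) k := by
  simp_rw [factorizationTerm_eq_mul_exp_quadratic a μ ν z ha.ne' hz.ne', tsum_mul_left,
    tsum_exp_neg_inv_mul_sq_add (by positivity : (0 : ℝ) < 2 * a * z.im)]
  rw [mul_left_comm, ← tsum_mul_left, ← (Equiv.neg ℤ).tsum_eq]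
  exact congrArg _ (tsum_congr fun k ↦ exp_mul_exp_eq_thetaCharTerm_mul a μ ν z ha.ne' hz.ne' m k)

end Factorization

/-- (Factorization formula of Rodriguez-Villegas and Zagier.) For `a ∈ ℤ_{>0}`,
`μ, ν ∈ ℚ` and `z = x + iy` with `y > 0`:
`∑_{(m,n)} e^{2πi(mν+nμ)} e^{π(imn − |mz−n|²/(2y))/a}
  = √(2ay) · θ[aμ; ν](z/a) · θ[μ; −aν](−a·conj z)`. -/
theorem factorization_formula (a : ℕ) (ha : 0 < a) (μ ν : ℚ) (z : ℂ) (hz : 0 < z.im) :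
    ∑' p : ℤ × ℤ,
      Complex.exp (2 * Real.pi * Complex.I * ((p.1 : ℂ) * (ν : ℂ) + (p.2 : ℂ) * (μ : ℂ))) *
        Complex.exp ((Real.pi : ℂ) * (Complex.I * (p.1 : ℂ) * (p.2 : ℂ)
          - (Complex.normSq ((p.1 : ℂ) * z - (p.2 : ℂ)) : ℂ) / (2 * (z.im : ℂ))) / (a : ℂ))
    = (Real.sqrt (2 * a * z.im) : ℂ) * thetaChar ((a : ℚ) * μ) ν (z / (a : ℂ)) *
        thetaChar μ (-(a : ℚ) * ν) (-(a : ℂ) * (starRingEnd ℂ) z) := by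
  set T₁ := thetaCharTerm (a * μ) ν (z / a)
  set T₂ := thetaCharTerm μ (-a * ν) (-a * conj z)
  have hT₁ : Summable (‖T₁ ·‖) :=
    summable_norm_thetaCharTerm _ _ (by simpa using div_pos hz (Nat.cast_pos.mpr ha))
  have hT₂ : Summable (‖T₂ ·‖) :=
    summable_norm_thetaCharTerm _ _ (by simpa using mul_pos (Nat.cast_pos.mpr ha) hz)
  have hG : Summable fun p : ℤ × ℤ ↦ T₁ (p.1 + a * p.2) * T₂ p.2 :=
    (shearEquiv a).summable_iff.mpr (summable_mul_of_summable_norm hT₁ hT₂)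
  calc ∑' p, factorizationTerm a μ ν z p
      = ∑' m, ∑' n, factorizationTerm a μ ν z (m, n) :=
        (summable_factorizationTerm a μ ν z ha hz).tsum_prod
    _ = √(2 * a * z.im) * ∑' m, ∑' k, T₁ (m + a * k) * T₂ k :=
        (tsum_congr (tsum_factorizationTerm_mk a μ ν z ha hz)).trans tsum_mul_left
    _ = √(2 * a * z.im) * ∑' p : ℤ × ℤ, T₁ p.1 * T₂ p.2 := by
      rw [← hG.tsum_prod]
      exact congrArg _ ((shearEquiv a).tsum_eq fun p ↦ T₁ p.1 * T₂ p.2)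
    _ = √(2 * a * z.im) * ((∑' n, T₁ n) * ∑' n, T₂ n) := by
      rw [tsum_mul_tsum_of_summable_norm hT₁ hT₂]
    _ = _ := (mul_assoc _ _ _).symm
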